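/- arXiv:2505.02028 — 2 statements merged into one kernel-verified Lean document; each statement's English description precedes it below -/
import Mathlib

section
/- Let a, F : ℝ → ℝ be continuous with F compactly supported, and let v⁰(t) := ∫_{−∞}^{t} e^{−∫_s^t a(r) dr} F(s) ds. Define v¹(t) := ∫_{−∞}^{t} e^{−∫_s^t a(r) dr} v⁰(s) ds. Then v¹(t) = t·v⁰(t) − ∫_{−∞}^{t} s e^{−∫_s^t a(r) dr} F(s) ds for every t ∈ ℝ. -/
/-!
Writing `A x = ∫ r in 0..x, a r`, the kernel factors as `exp (-∫ r in s..t, a r) = e^{-A t} e^{A s}`.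
With `g = e^A F` this gives `v⁰ = e^{-A} ∫_{-∞}^· g` and `v¹(t) = e^{-A t} ∫_{-∞}^t ∫_{-∞}^s g`,
and the double integral is `t ∫_{-∞}^t g - ∫_{-∞}^t s g(s) ds` by integration by parts, which is
legitimate because `g` vanishes to the left of its compact support, so that every integral over
`(-∞, t]` is one over a bounded interval `[c, t]`.
-/

open MeasureTheory intervalIntegral Set Real

theorem HasCompactSupport.exists_le_eqOn_zero_Iic {E : Type*} [Zero E] {f : ℝ → E}
    (hf : HasCompactSupport f) (t : ℝ) : ∃ c ≤ t, EqOn f 0 (Iic c) := by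
  obtain ⟨b, hb⟩ := hf.isCompact.bddBelow
  refine ⟨min (b - 1) t, min_le_right _ _, fun x hx => image_eq_zero_of_notMem_tsupport ?_⟩
  intro hx_supp
  have : x ≤ b - 1 := hx.out.trans (min_le_left _ _)
  linarith [hb hx_supp]

theorem setIntegral_Iic_eq_intervalIntegral_of_eqOn_zero {E : Type*} [NormedAddCommGroup E]
    [NormedSpace ℝ E] {f : ℝ → E} {c t : ℝ} (hct : c ≤ t)
    (hf : EqOn f 0 (Iic c)) : ∫ x in Iic t, f x = ∫ x in c..t, f x := by
  rw [integral_of_le hct]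
  refine setIntegral_eq_of_subset_of_forall_sdiff_eq_zero measurableSet_Iic Ioc_subset_Iic_self ?_
  rw [Iic_sdiff_Ioc_self_of_le hct]
  exact fun x hx => hf hx

theorem integral_Iic_integral_Iic_eq_sub {g : ℝ → ℝ} (hg : Continuous g)
    (hgs : HasCompactSupport g) (t : ℝ) :
    ∫ s in Iic t, ∫ u in Iic s, g u = t * (∫ u in Iic t, g u) - ∫ s in Iic t, s * g s := by
  obtain ⟨c, hct, hc⟩ := hgs.exists_le_eqOn_zero_Iic t
  have primitive_eq : ∀ s, c ≤ s → ∫ u in Iic s, g u = ∫ u in c..s, g u := fun s hs =>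
    setIntegral_Iic_eq_intervalIntegral_of_eqOn_zero hs hc
  have primitive_zero : EqOn (fun s => ∫ u in Iic s, g u) 0 (Iic c) := fun s hs =>
    setIntegral_eq_zero_of_forall_eq_zero fun u hu => hc (mem_Iic.mpr (hu.out.trans hs))
  have moment_zero : EqOn (fun s => s * g s) 0 (Iic c) := fun s hs => by simp [hc hs]
  have parts := integral_mul_deriv_eq_deriv_mul (a := c) (b := t) (v := id) (v' := fun _ => 1)
    (fun x _ => (hg.integral_hasStrictDerivAt c x).hasDerivAt) (fun x _ => hasDerivAt_id x)
    (hg.intervalIntegrable c t) intervalIntegrable_const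
  simp only [id, mul_one, integral_same, zero_mul, sub_zero] at parts
  rw [setIntegral_Iic_eq_intervalIntegral_of_eqOn_zero hct primitive_zero,
    setIntegral_Iic_eq_intervalIntegral_of_eqOn_zero hct moment_zero, primitive_eq t hct,
    integral_congr fun s hs => primitive_eq s (uIcc_of_le hct ▸ hs).1, parts]
  simp only [mul_comm]

section IntegratingFactor

variable {a : ℝ → ℝ}

theorem exp_neg_intervalIntegral_eq_mul (ha : ∀ x y : ℝ, IntervalIntegrable a volume x y)
    (s t : ℝ) :
    exp (-∫ r in s..t, a r) = exp (-∫ r in (0 : ℝ)..t, a r) * exp (∫ r in (0 : ℝ)..s, a r) := by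
  rw [← integral_interval_sub_left (ha 0 t) (ha 0 s), ← exp_add]
  ring_nf

theorem setIntegral_Iic_exp_neg_mul_eq (ha : ∀ x y : ℝ, IntervalIntegrable a volume x y)
    (h : ℝ → ℝ) (t : ℝ) :
    ∫ s in Iic t, exp (-∫ r in s..t, a r) * h s =
      exp (-∫ r in (0 : ℝ)..t, a r) * ∫ s in Iic t, exp (∫ r in (0 : ℝ)..s, a r) * h s := by
  rw [← MeasureTheory.integral_const_mul]
  congr 2 with s
  rw [exp_neg_intervalIntegral_eq_mul ha, mul_assoc]

end IntegratingFactor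

theorem first_moment_relation (a F : ℝ → ℝ) (ha : Continuous a) (hF : Continuous F)
    (hsupp : HasCompactSupport F)
    (v0 v1 : ℝ → ℝ)
    (hv0 : ∀ t : ℝ, v0 t = ∫ s in Set.Iic t, Real.exp (-(∫ r in s..t, a r)) * F s)
    (hv1 : ∀ t : ℝ, v1 t = ∫ s in Set.Iic t, Real.exp (-(∫ r in s..t, a r)) * v0 s) :
    ∀ t : ℝ,
      v1 t = t * v0 t - ∫ s in Set.Iic t, s * Real.exp (-(∫ r in s..t, a r)) * F s := by
  intro t
  have ha' : ∀ x y : ℝ, IntervalIntegrable a volume x y := ha.intervalIntegrable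
  set A : ℝ → ℝ := fun x => ∫ r in (0 : ℝ)..x, a r
  set g : ℝ → ℝ := fun s => exp (A s) * F s
  have hg : Continuous g := (continuous_exp.comp (continuous_primitive ha' 0)).mul hF
  have v0_eq : ∀ x, v0 x = exp (-A x) * ∫ s in Iic x, g s := fun x =>
    (hv0 x).trans (setIntegral_Iic_exp_neg_mul_eq ha' F x)
  have v1_eq : v1 t = exp (-A t) * ∫ s in Iic t, ∫ u in Iic s, g u := by
    rw [hv1, setIntegral_Iic_exp_neg_mul_eq ha']
    congr 2 with s
    rw [v0_eq, ← mul_assoc, ← exp_add, add_neg_cancel, exp_zero, one_mul]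
  have moment_eq : ∫ s in Iic t, s * exp (-∫ r in s..t, a r) * F s =
      exp (-A t) * ∫ s in Iic t, s * g s := by
    simp_rw [mul_comm _ (exp _), mul_assoc, setIntegral_Iic_exp_neg_mul_eq ha' _ t, g, A,
      mul_left_comm]
  rw [v1_eq, v0_eq, moment_eq, integral_Iic_integral_Iic_eq_sub hg hsupp.mul_left]
  ring
end

section
/- Let a, F : ℝ → ℝ be continuous with F compactly supported, and define v⁰(t) = ∫_{−∞}^{t} e^{−∫_s^t a} F(s) ds, v¹(t) = ∫_{−∞}^{t} e^{−∫_s^t a} v⁰(s) ds, and v²(t) = ∫_{−∞}^{t} e^{−∫_s^t a} v¹(s) ds. Then v²(t) = (t²/2)·v⁰(t) − t·∫_{−∞}^{t} s e^{−∫_s^t a} F(s) ds + (1/2)∫_{−∞}^{t} s² e^{−∫_s^t a} F(s) ds, i.e., v²(t) = t·v¹(t) − (t²/2)v⁰(t) + (1/2)∫_{−∞}^{t} s² e^{−∫_s^t a} F(s) ds. -/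
open MeasureTheory intervalIntegral

lemma prim_deriv {g : ℝ → ℝ} (hg : Continuous g) (c t : ℝ) :
    HasDerivAt (fun u => ∫ s in c..u, g s) (g t) t :=
  intervalIntegral.integral_hasDerivAt_right (hg.intervalIntegrable c t)
    (hg.stronglyMeasurableAtFilter _ _) hg.continuousAt

lemma eq_of_deriv_eq {f g f' : ℝ → ℝ} (c : ℝ)
    (hf : ∀ t, HasDerivAt f (f' t) t) (hg : ∀ t, HasDerivAt g (f' t) t)
    (hc : f c = g c) (t : ℝ) : f t = g t := by
  have hD : ∀ x : ℝ, HasDerivAt (fun y => f y - g y) 0 x := fun x => by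
    have h := (hf x).sub (hg x)
    rw [sub_self] at h
    exact h
  have hconst := is_const_of_deriv_eq_zero (f := fun y => f y - g y)
    (fun z => (hD z).differentiableAt) (fun z => (hD z).deriv) t c
  linarith

lemma Iic_int_eq {g : ℝ → ℝ} (hg : Continuous g) {c : ℝ}
    (h0 : ∀ s ≤ c, g s = 0) (t : ℝ) :
    ∫ s in Set.Iic t, g s = ∫ s in c..t, g s := by
  rcases le_total t c with h | h
  · have h1 : ∀ s ∈ Set.Iic t, g s = 0 := fun s hs => h0 s (le_trans hs h)
    rw [MeasureTheory.setIntegral_congr_fun measurableSet_Iic h1]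
    have h2 : Set.EqOn g 0 (Set.uIcc c t) := by
      intro s hs
      rw [Set.uIcc_of_ge h] at hs; exact h0 s hs.2
    rw [intervalIntegral.integral_congr h2]
    simp
  · have hu : Set.Iic c ∪ Set.Ioc c t = Set.Iic t := Set.Iic_union_Ioc_eq_Iic h
    have h1 : ∀ s ∈ Set.Iic c, g s = 0 := fun s hs => h0 s hs
    have hint1 : IntegrableOn g (Set.Iic c) := by
      apply (integrableOn_congr_fun h1 measurableSet_Iic).mpr
      simp
    have hint2 : IntegrableOn g (Set.Ioc c t) := hg.integrableOn_Ioc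
    rw [← hu, MeasureTheory.setIntegral_union (Set.Iic_disjoint_Ioc le_rfl)
      measurableSet_Ioc hint1 hint2,
      MeasureTheory.setIntegral_congr_fun measurableSet_Iic h1,
      intervalIntegral.integral_of_le h]
    simp

lemma prim_zero {g : ℝ → ℝ} (hg : Continuous g) {c : ℝ}
    (h0 : ∀ s ≤ c, g s = 0) {s : ℝ} (hs : s ≤ c) : ∫ x in c..s, g x = 0 := by
  rw [← Iic_int_eq hg h0 s,
    MeasureTheory.setIntegral_congr_fun measurableSet_Iic
      (fun x hx => h0 x (le_trans hx hs))]
  simp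

theorem second_moment_relation (a F : ℝ → ℝ) (ha : Continuous a) (hF : Continuous F)
    (hsupp : HasCompactSupport F)
    (v0 v1 v2 : ℝ → ℝ)
    (hv0 : ∀ t : ℝ, v0 t = ∫ s in Set.Iic t, Real.exp (-(∫ r in s..t, a r)) * F s)
    (hv1 : ∀ t : ℝ, v1 t = ∫ s in Set.Iic t, Real.exp (-(∫ r in s..t, a r)) * v0 s)
    (hv2 : ∀ t : ℝ, v2 t = ∫ s in Set.Iic t, Real.exp (-(∫ r in s..t, a r)) * v1 s) :
    ∀ t : ℝ,
      (v2 t = (t ^ 2 / 2) * v0 t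
          - t * (∫ s in Set.Iic t, s * Real.exp (-(∫ r in s..t, a r)) * F s)
          + (1 / 2) * ∫ s in Set.Iic t, s ^ 2 * Real.exp (-(∫ r in s..t, a r)) * F s) ∧
      (v2 t = t * v1 t - (t ^ 2 / 2) * v0 t
          + (1 / 2) * ∫ s in Set.Iic t, s ^ 2 * Real.exp (-(∫ r in s..t, a r)) * F s) := by
  -- The integral of a from 0
  set A : ℝ → ℝ := fun t => ∫ r in (0:ℝ)..t, a r with hAdef
  have hAderiv : ∀ t, HasDerivAt A (a t) t := fun t =>
    intervalIntegral.integral_hasDerivAt_right (ha.intervalIntegrable 0 t)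
      (ha.stronglyMeasurableAtFilter _ _) ha.continuousAt
  have hAcont : Continuous A :=
    Differentiable.continuous (fun t => (hAderiv t).differentiableAt)
  have hAint : ∀ s t : ℝ, (∫ r in s..t, a r) = A t - A s := fun s t =>
    (intervalIntegral.integral_interval_sub_left (ha.intervalIntegrable 0 t)
      (ha.intervalIntegrable 0 s)).symm
  -- support bound
  obtain ⟨R, hR⟩ := hsupp.isCompact.isBounded.subset_closedBall 0
  set c : ℝ := -(|R| + 1) with hcdef
  have hFc : ∀ s ≤ c, F s = 0 := by
    intro s hs
    apply image_eq_zero_of_notMem_tsupport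
    intro hmem
    have h1 := hR hmem
    rw [Real.closedBall_eq_Icc] at h1
    have h2 := h1.1
    have := abs_nonneg R
    have := le_abs_self R
    have := neg_abs_le R
    simp only [hcdef] at hs
    linarith
  -- the attenuated-moment primitives
  set u0 : ℝ → ℝ := fun t => ∫ s in c..t, Real.exp (A s) * F s with hu0def
  set u1 : ℝ → ℝ := fun t => ∫ s in c..t, s * Real.exp (A s) * F s with hu1def
  set u2 : ℝ → ℝ := fun t => ∫ s in c..t, s ^ 2 * Real.exp (A s) * F s with hu2def
  have hg0c : Continuous (fun s => Real.exp (A s) * F s) :=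
    (Real.continuous_exp.comp hAcont).mul hF
  have hg1c : Continuous (fun s : ℝ => s * Real.exp (A s) * F s) :=
    (continuous_id.mul (Real.continuous_exp.comp hAcont)).mul hF
  have hg2c : Continuous (fun s : ℝ => s ^ 2 * Real.exp (A s) * F s) :=
    ((continuous_pow 2).mul (Real.continuous_exp.comp hAcont)).mul hF
  have hg0z : ∀ s ≤ c, Real.exp (A s) * F s = 0 := fun s hs => by
    rw [hFc s hs]; ring
  have hg1z : ∀ s ≤ c, s * Real.exp (A s) * F s = 0 := fun s hs => by
    rw [hFc s hs]; ring
  have hg2z : ∀ s ≤ c, s ^ 2 * Real.exp (A s) * F s = 0 := fun s hs => by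
    rw [hFc s hs]; ring
  have hu0d : ∀ t, HasDerivAt u0 (Real.exp (A t) * F t) t := prim_deriv hg0c c
  have hu1d : ∀ t, HasDerivAt u1 (t * Real.exp (A t) * F t) t := prim_deriv hg1c c
  have hu2d : ∀ t, HasDerivAt u2 (t ^ 2 * Real.exp (A t) * F t) t := prim_deriv hg2c c
  have hu0cont : Continuous u0 :=
    Differentiable.continuous (fun t => (hu0d t).differentiableAt)
  have hu1cont : Continuous u1 :=
    Differentiable.continuous (fun t => (hu1d t).differentiableAt)
  have hu0z : ∀ s ≤ c, u0 s = 0 := fun s hs => prim_zero hg0c hg0z hs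
  have hu1z : ∀ s ≤ c, u1 s = 0 := fun s hs => prim_zero hg1c hg1z hs
  -- closed form for v0
  have hv0' : ∀ t, v0 t = Real.exp (-(A t)) * u0 t := by
    intro t
    rw [hv0 t]
    have e1 : ∀ s, Real.exp (-(∫ r in s..t, a r)) * F s
        = Real.exp (-(A t)) * (Real.exp (A s) * F s) := by
      intro s
      rw [hAint s t, ← mul_assoc, ← Real.exp_add]
      ring_nf
    simp only [e1]
    rw [MeasureTheory.integral_const_mul]
    congr 1
    exact Iic_int_eq hg0c hg0z t
  have hv0cont : Continuous v0 := by
    have : v0 = fun t => Real.exp (-(A t)) * u0 t := funext hv0'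
    rw [this]
    exact (Real.continuous_exp.comp hAcont.neg).mul hu0cont
  have hv0z : ∀ s ≤ c, v0 s = 0 := fun s hs => by rw [hv0' s, hu0z s hs]; ring
  have hkey0 : ∀ s, Real.exp (A s) * v0 s = u0 s := fun s => by
    rw [hv0' s, ← mul_assoc, ← Real.exp_add]
    simp
  -- first moment identity
  have key1 : ∀ t, (∫ s in c..t, u0 s) = t * u0 t - u1 t := by
    apply eq_of_deriv_eq (f' := u0) c
    · exact prim_deriv hu0cont c
    · intro t
      have h1 : HasDerivAt (fun y => y * u0 y - u1 y) _ t := ((hasDerivAt_id t).mul (hu0d t)).sub (hu1d t)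
      convert h1 using 1
      simp only [id_eq]
      ring
    · simp [hu0z c le_rfl, hu1z c le_rfl]
  have hv1' : ∀ t, v1 t = Real.exp (-(A t)) * (t * u0 t - u1 t) := by
    intro t
    rw [hv1 t]
    have e1 : ∀ s, Real.exp (-(∫ r in s..t, a r)) * v0 s
        = Real.exp (-(A t)) * (Real.exp (A s) * v0 s) := by
      intro s
      rw [hAint s t, ← mul_assoc, ← Real.exp_add]
      ring_nf
    simp only [e1]
    rw [MeasureTheory.integral_const_mul]
    congr 1
    have hgc : Continuous (fun s => Real.exp (A s) * v0 s) :=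
      (Real.continuous_exp.comp hAcont).mul hv0cont
    rw [Iic_int_eq hgc (fun s hs => by rw [hv0z s hs]; ring) t,
      intervalIntegral.integral_congr (g := u0) (fun s _ => hkey0 s)]
    exact key1 t
  have hv1cont : Continuous v1 := by
    have : v1 = fun t => Real.exp (-(A t)) * (t * u0 t - u1 t) := funext hv1'
    rw [this]
    exact (Real.continuous_exp.comp hAcont.neg).mul
      ((continuous_id.mul hu0cont).sub hu1cont)
  have hv1z : ∀ s ≤ c, v1 s = 0 := fun s hs => by
    rw [hv1' s, hu0z s hs, hu1z s hs]; ring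
  have hkey1 : ∀ s, Real.exp (A s) * v1 s = s * u0 s - u1 s := fun s => by
    rw [hv1' s, ← mul_assoc, ← Real.exp_add]
    simp
  -- second moment identity
  have key2 : ∀ t, (∫ s in c..t, (s * u0 s - u1 s))
      = t ^ 2 / 2 * u0 t - t * u1 t + u2 t / 2 := by
    apply eq_of_deriv_eq (f' := fun t => t * u0 t - u1 t) c
    · exact prim_deriv ((continuous_id.mul hu0cont).sub hu1cont) c
    · intro t
      have h1 : HasDerivAt (fun y => y ^ 2 / 2 * u0 y - y * u1 y + u2 y / 2) _ t :=
        (((((hasDerivAt_pow 2 t).div_const 2).mul (hu0d t)).sub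
        ((hasDerivAt_id t).mul (hu1d t))).add ((hu2d t).div_const 2))
      convert h1 using 1
      norm_num
      ring
    · have hu2c : u2 c = 0 := intervalIntegral.integral_same
      simp [hu0z c le_rfl, hu1z c le_rfl, hu2c]
  have hv2' : ∀ t, v2 t = Real.exp (-(A t))
      * (t ^ 2 / 2 * u0 t - t * u1 t + u2 t / 2) := by
    intro t
    rw [hv2 t]
    have e1 : ∀ s, Real.exp (-(∫ r in s..t, a r)) * v1 s
        = Real.exp (-(A t)) * (Real.exp (A s) * v1 s) := by
      intro s
      rw [hAint s t, ← mul_assoc, ← Real.exp_add]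
      ring_nf
    simp only [e1]
    rw [MeasureTheory.integral_const_mul]
    congr 1
    have hgc : Continuous (fun s => Real.exp (A s) * v1 s) :=
      (Real.continuous_exp.comp hAcont).mul hv1cont
    rw [Iic_int_eq hgc (fun s hs => by rw [hv1z s hs]; ring) t,
      intervalIntegral.integral_congr (g := fun s => s * u0 s - u1 s)
        (fun s _ => hkey1 s)]
    exact key2 t
  -- the moment integrals
  have hM1 : ∀ t, (∫ s in Set.Iic t, s * Real.exp (-(∫ r in s..t, a r)) * F s)
      = Real.exp (-(A t)) * u1 t := by
    intro t
    have e1 : ∀ s, s * Real.exp (-(∫ r in s..t, a r)) * F s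
        = Real.exp (-(A t)) * (s * Real.exp (A s) * F s) := by
      intro s
      rw [hAint s t]
      rw [show -(A t - A s) = A s + -(A t) by ring, Real.exp_add]
      ring
    simp only [e1]
    rw [MeasureTheory.integral_const_mul]
    congr 1
    exact Iic_int_eq hg1c hg1z t
  have hM2 : ∀ t, (∫ s in Set.Iic t, s ^ 2 * Real.exp (-(∫ r in s..t, a r)) * F s)
      = Real.exp (-(A t)) * u2 t := by
    intro t
    have e1 : ∀ s, s ^ 2 * Real.exp (-(∫ r in s..t, a r)) * F s
        = Real.exp (-(A t)) * (s ^ 2 * Real.exp (A s) * F s) := by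
      intro s
      rw [hAint s t]
      rw [show -(A t - A s) = A s + -(A t) by ring, Real.exp_add]
      ring
    simp only [e1]
    rw [MeasureTheory.integral_const_mul]
    congr 1
    exact Iic_int_eq hg2c hg2z t
  -- conclusion
  intro t
  constructor
  · rw [hv2' t, hv0' t, hM1 t, hM2 t]
    ring
  · rw [hv2' t, hv1' t, hv0' t, hM2 t]
    ring
end
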